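/- arXiv:2506.16047 — 2 statements merged into one kernel-verified Lean document; each statement's English description precedes it below -/
import Mathlib

section
/- Let P, Q ∈ 𝒬_p(𝒳,𝒴) be Lipschitz continuous kernels with Lipschitz constants L_P and L_Q, and let (λ_k)_{k≥1} ⊂ 𝒫_p(𝒳) converge weakly in 𝒫_p(𝒳) to λ ∈ 𝒫_p(𝒳) (i.e., λ_k ⇀ λ and the p-th moments converge). Then the p-th powers of the integrated transportation distances converge: ∫ [W_p(P(·|x),Q(·|x))]^p λ_k(dx) → ∫ [W_p(P(·|x),Q(·|x))]^p λ(dx), and hence 𝒲_p^{λ_k}(P,Q) → 𝒲_p^λ(P,Q) as k → ∞. -/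
/-!
By the triangle inequality for `W_p` (gluing two couplings along their common marginal and
applying Minkowski's inequality), the Lipschitz bounds on `P` and `Q` make
`x ↦ W_p(P(·|x), Q(·|x))` Lipschitz with constant `L_P + L_Q`. Its `p`-th power is therefore
continuous with growth at most `C (1 + d(x₀, x)^p)`, so after dividing by `C` it is an admissible
test function for convergence in `𝒫_p(𝒳)`. The second limit follows by continuity of `t ↦ t^(1/p)`.
-/

open MeasureTheory Filter

/-- Optimal transport cost between `μ` and `ν` for cost function `c`:
the infimum of `∫ c` over all couplings of `μ` and `ν`. -/
noncomputable def Wcost {α β : Type*} [MeasurableSpace α] [MeasurableSpace β]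
    (c : α → β → ℝ) (μ : Measure α) (ν : Measure β) : ℝ :=
  sInf {r : ℝ | ∃ π : Measure (α × β),
    π.map Prod.fst = μ ∧ π.map Prod.snd = ν ∧ r = ∫ z, c z.1 z.2 ∂π}

/-- The Wasserstein (optimal transport) distance of order `p`. -/
noncomputable def Wp {α : Type*} [MeasurableSpace α] [PseudoMetricSpace α]
    (p : ℝ) (μ ν : Measure α) : ℝ :=
  Wcost (fun x y => dist x y ^ p) μ ν ^ (1 / p)

/-- `μ ∈ 𝒫_p(α)`: probability measure with finite `p`-th moment. -/
def MemPp {α : Type*} [MeasurableSpace α] [PseudoMetricSpace α] (p : ℝ) (μ : Measure α) : Prop :=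
  IsProbabilityMeasure μ ∧ ∀ x₀ : α, Integrable (fun x => dist x₀ x ^ p) μ

/-- `Q ∈ 𝒬_p(X, Y)`: a kernel, i.e. a measurable family of probability measures in `𝒫_p(Y)`
satisfying the growth condition `∫ d(y, y₀)^p dQ(·|x) ≤ C (1 + d(x, x₀)^p)`. -/
def MemQp {X Y : Type*} [MeasurableSpace X] [PseudoMetricSpace X]
    [MeasurableSpace Y] [PseudoMetricSpace Y] (p : ℝ) (Q : X → Measure Y) : Prop :=
  (∀ x, IsProbabilityMeasure (Q x)) ∧
  (∀ B : Set Y, MeasurableSet B → Measurable fun x => Q x B) ∧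
  (∀ x, ∀ y₀ : Y, Integrable (fun y => dist y₀ y ^ p) (Q x)) ∧
  ∃ x₀ : X, ∃ y₀ : Y, ∃ C > (0 : ℝ), ∀ x,
    (∫ y, dist y y₀ ^ p ∂(Q x)) ≤ C * (1 + dist x x₀ ^ p)

/-- The integrated transportation distance of degree `p` with marginal `lam`. -/
noncomputable def ITD {X Y : Type*} [MeasurableSpace X] [PseudoMetricSpace X]
    [MeasurableSpace Y] [PseudoMetricSpace Y]
    (p : ℝ) (lam : Measure X) (P Q : X → Measure Y) : ℝ :=
  (∫ x, Wp p (P x) (Q x) ^ p ∂lam) ^ (1 / p)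

/-- A kernel `Q` is Lipschitz continuous with constant `L` if
`W_p(Q(·|x), Q(·|x')) ≤ L · d(x, x')` for all `x, x'`. -/
def KernelLip {X Y : Type*} [MeasurableSpace X] [PseudoMetricSpace X]
    [MeasurableSpace Y] [PseudoMetricSpace Y] (p L : ℝ) (Q : X → Measure Y) : Prop :=
  ∀ x x' : X, Wp p (Q x) (Q x') ≤ L * dist x x'

/-- Weak convergence in `𝒫_p(X)`: `∫ φ dμ_k → ∫ φ dμ` for every continuous test function
`φ` with `|φ(x)| ≤ 1 + d(x₀, x)^p`. -/
def TendstoPp {X : Type*} [MeasurableSpace X] [PseudoMetricSpace X]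
    (p : ℝ) (μs : ℕ → Measure X) (μ : Measure X) : Prop :=
  ∀ x₀ : X, ∀ φ : X → ℝ, Continuous φ → (∀ x, |φ x| ≤ 1 + dist x₀ x ^ p) →
    Filter.Tendsto (fun k => ∫ x, φ x ∂(μs k)) Filter.atTop (nhds (∫ x, φ x ∂μ))

lemma Real.add_rpow_le_two_rpow_mul_rpow_add_rpow {p a b : ℝ} (hp : 0 ≤ p) (ha : 0 ≤ a)
    (hb : 0 ≤ b) : (a + b) ^ p ≤ 2 ^ p * (a ^ p + b ^ p) := calc
  (a + b) ^ p ≤ (2 * max a b) ^ p := by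
    rw [two_mul]; gcongr <;> simp
  _ = 2 ^ p * max a b ^ p := Real.mul_rpow zero_le_two (ha.trans (le_max_left a b))
  _ ≤ 2 ^ p * (a ^ p + b ^ p) := by
    gcongr
    rcases le_total a b with h | h
    · rw [max_eq_right h]; exact le_add_of_nonneg_left (Real.rpow_nonneg ha p)
    · rw [max_eq_left h]; exact le_add_of_nonneg_right (Real.rpow_nonneg hb p)

lemma integral_norm_add_rpow_le {α E : Type*} [MeasurableSpace α] [NormedAddCommGroup E]
    {μ : Measure α} {p : ℝ} (hp : 1 ≤ p) {f g : α → E} (hf : MemLp f (ENNReal.ofReal p) μ)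
    (hg : MemLp g (ENNReal.ofReal p) μ) :
    (∫ a, ‖f a + g a‖ ^ p ∂μ) ^ p⁻¹ ≤ (∫ a, ‖f a‖ ^ p ∂μ) ^ p⁻¹ + (∫ a, ‖g a‖ ^ p ∂μ) ^ p⁻¹ := by
  have hp0 : ENNReal.ofReal p ≠ 0 := by simp; linarith
  have key := eLpNorm_add_le hf.1 hg.1 (ENNReal.one_le_ofReal.2 hp)
  rwa [(hf.add hg).eLpNorm_eq_integral_rpow_norm hp0 ENNReal.ofReal_ne_top,
    hf.eLpNorm_eq_integral_rpow_norm hp0 ENNReal.ofReal_ne_top,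
    hg.eLpNorm_eq_integral_rpow_norm hp0 ENNReal.ofReal_ne_top,
    ← ENNReal.ofReal_add (by positivity) (by positivity),
    ENNReal.ofReal_le_ofReal_iff (by positivity), ENNReal.toReal_ofReal (by linarith)] at key

lemma LipschitzWith.exists_abs_rpow_le_mul_one_add_dist_rpow {X : Type*} [PseudoMetricSpace X]
    {p : ℝ} {K : NNReal} {f : X → ℝ}
    (hf : LipschitzWith K f) (hf₀ : ∀ x, 0 ≤ f x) (hp : 0 ≤ p) (x₀ : X) :
    ∃ C > 0, ∀ x, |f x ^ p| ≤ C * (1 + dist x₀ x ^ p) := by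
  have hfx₀ : 0 ≤ f x₀ ^ p := Real.rpow_nonneg (hf₀ x₀) p
  refine ⟨2 ^ p * (f x₀ ^ p + (K : ℝ) ^ p) + 1, by positivity, fun x => ?_⟩
  have hfx : f x ≤ f x₀ + K * dist x₀ x := by
    have := (le_abs_self _).trans ((Real.dist_eq (f x) (f x₀)).symm.trans_le (hf.dist_le_mul x x₀))
    rw [dist_comm] at this
    linarith
  have ht : 0 ≤ dist x₀ x ^ p := by positivity
  have hK : 0 ≤ (K : ℝ) ^ p := by positivity
  calc |f x ^ p| = f x ^ p := abs_of_nonneg (Real.rpow_nonneg (hf₀ x) p)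
    _ ≤ (f x₀ + K * dist x₀ x) ^ p := Real.rpow_le_rpow (hf₀ x) hfx hp
    _ ≤ 2 ^ p * (f x₀ ^ p + (K * dist x₀ x) ^ p) :=
        Real.add_rpow_le_two_rpow_mul_rpow_add_rpow hp (hf₀ x₀) (by positivity)
    _ = 2 ^ p * f x₀ ^ p + 2 ^ p * (K : ℝ) ^ p * dist x₀ x ^ p := by
        rw [Real.mul_rpow K.coe_nonneg dist_nonneg]; ring
    _ ≤ (2 ^ p * (f x₀ ^ p + (K : ℝ) ^ p) + 1) * (1 + dist x₀ x ^ p) := by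
        nlinarith [Real.rpow_nonneg zero_le_two p, mul_nonneg (Real.rpow_nonneg zero_le_two p) hfx₀]

section Wcost

variable {α β : Type*} [MeasurableSpace α] [MeasurableSpace β]

lemma wcost_comm (c : α → β → ℝ) (μ : Measure α) (ν : Measure β) :
    Wcost (fun y x => c x y) ν μ = Wcost c μ ν := by
  unfold Wcost
  congr 1
  ext r
  constructor <;>
  · rintro ⟨π, h1, h2, rfl⟩
    refine ⟨π.map Prod.swap, ?_, ?_, ?_⟩
    · rwa [Measure.map_map measurable_fst measurable_swap]
    · rwa [Measure.map_map measurable_snd measurable_swap]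
    · rw [show (Prod.swap : _ → _) = MeasurableEquiv.prodComm from rfl, integral_map_equiv]
      rfl

variable {γ : Type*} [MeasurableSpace γ] [StandardBorelSpace γ] [Nonempty γ]

open ProbabilityTheory in
lemma exists_gluing {π₁ : Measure (α × β)} {π₂ : Measure (β × γ)} [SFinite π₁]
    [IsFiniteMeasure π₂] (h : π₁.map Prod.snd = π₂.map Prod.fst) :
    ∃ θ : Measure ((α × β) × γ),
      θ.map Prod.fst = π₁ ∧ θ.map (fun w => (w.1.2, w.2)) = π₂ := by
  let κ := π₂.condKernel
  refine ⟨π₁ ⊗ₘ Kernel.prodMkLeft α κ, Measure.fst_compProd _ _, ?_⟩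
  have hm : Measurable fun w : (α × β) × γ => (w.1.2, w.2) := by fun_prop
  ext s hs
  rw [Measure.map_apply hm hs, Measure.compProd_apply (hm hs)]
  calc ∫⁻ a, κ a.2 (Prod.mk a.2 ⁻¹' s) ∂π₁
      = ∫⁻ b, κ b (Prod.mk b ⁻¹' s) ∂(π₁.map Prod.snd) :=
        (lintegral_map (Kernel.measurable_kernel_prodMk_left hs) measurable_snd).symm
    _ = (π₂.fst ⊗ₘ κ) s := by rw [h, Measure.compProd_apply hs]; rfl
    _ = π₂ s := by rw [π₂.disintegrate π₂.condKernel]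

end Wcost

section Wasserstein

variable {Y : Type*} [PseudoMetricSpace Y] [MeasurableSpace Y] {p : ℝ} {μ ν ρ : Measure Y}

lemma wcost_dist_rpow_nonneg : 0 ≤ Wcost (fun x y : Y => dist x y ^ p) μ ν :=
  Real.sInf_nonneg <| by
    rintro _ ⟨π, -, -, rfl⟩
    exact integral_nonneg fun _ => Real.rpow_nonneg dist_nonneg _

lemma wcost_dist_rpow_le_integral {π : Measure (Y × Y)} (h₁ : π.map Prod.fst = μ)
    (h₂ : π.map Prod.snd = ν) :
    Wcost (fun x y : Y => dist x y ^ p) μ ν ≤ ∫ z, dist z.1 z.2 ^ p ∂π := by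
  refine csInf_le ⟨0, ?_⟩ ⟨π, h₁, h₂, rfl⟩
  rintro _ ⟨π, -, -, rfl⟩
  exact integral_nonneg fun _ => Real.rpow_nonneg dist_nonneg _

lemma wp_nonneg : 0 ≤ Wp p μ ν := Real.rpow_nonneg wcost_dist_rpow_nonneg _

lemma wp_comm (μ ν : Measure Y) : Wp p μ ν = Wp p ν μ := by
  simp only [Wp, ← wcost_comm (fun x y : Y => dist x y ^ p) μ ν, dist_comm]

lemma exists_coupling_rpow_integral_lt (hp : 0 < p) [IsProbabilityMeasure μ]
    [IsProbabilityMeasure ν] {ε : ℝ} (hε : 0 < ε) :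
    ∃ π : Measure (Y × Y), π.map Prod.fst = μ ∧ π.map Prod.snd = ν ∧
      (∫ z, dist z.1 z.2 ^ p ∂π) ^ (1 / p) < Wp p μ ν + ε := by
  have hcont : ContinuousAt (fun t : ℝ => t ^ (1 / p)) (Wcost (fun x y => dist x y ^ p) μ ν) :=
    Real.continuousAt_rpow_const _ _ (Or.inr (by positivity))
  obtain ⟨δ, hδ, hclose⟩ := Metric.continuousAt_iff.1 hcont ε hε
  obtain ⟨_, ⟨π, h₁, h₂, rfl⟩, hlt⟩ :=
    Real.lt_sInf_add_pos (s := {r | ∃ π : Measure (Y × Y), π.map Prod.fst = μ ∧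
      π.map Prod.snd = ν ∧ r = ∫ z, dist z.1 z.2 ^ p ∂π})
      ⟨_, μ.prod ν, Measure.fst_prod, Measure.snd_prod, rfl⟩ hδ
  change _ < Wcost (fun x y => dist x y ^ p) μ ν + δ at hlt
  have hle := wcost_dist_rpow_le_integral (p := p) h₁ h₂
  have hπ := hclose (x := ∫ z, dist z.1 z.2 ^ p ∂π)
    (by rw [Real.dist_eq, abs_lt]; constructor <;> linarith)
  rw [Real.dist_eq, abs_lt] at hπ
  exact ⟨π, h₁, h₂, by unfold Wp; linarith⟩

end Wasserstein

section Polish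

variable {Y : Type*} [MetricSpace Y] [PolishSpace Y] [MeasurableSpace Y] [BorelSpace Y]
  {p : ℝ} {μ ν ρ : Measure Y}

lemma MemPp.memLp_dist (hp : 0 < p) (hμ : MemPp p μ) (y₀ : Y) :
    MemLp (dist y₀) (ENNReal.ofReal p) μ := by
  rw [← integrable_norm_rpow_iff (by fun_prop) (by simpa using hp) ENNReal.ofReal_ne_top]
  simpa [ENNReal.toReal_ofReal hp.le] using hμ.2 y₀

lemma memLp_dist_of_memLp_map {q : ENNReal} {π : Measure (Y × Y)} (y₀ : Y)
    (h₁ : MemLp (dist y₀) q (π.map Prod.fst)) (h₂ : MemLp (dist y₀) q (π.map Prod.snd)) :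
    MemLp (fun z : Y × Y => dist z.1 z.2) q π := by
  refine ((h₁.comp_of_map measurable_fst.aemeasurable).add
    (h₂.comp_of_map measurable_snd.aemeasurable)).mono' (by fun_prop) (ae_of_all _ fun z => ?_)
  rw [Real.norm_of_nonneg dist_nonneg]
  exact dist_triangle_left _ _ y₀

lemma wp_le_rpow_integral_dist_add_rpow_integral_dist (hp : 1 ≤ p)
    {θ : Measure ((Y × Y) × Y)} (h₁ : θ.map (fun w => w.1.1) = μ) (h₃ : θ.map Prod.snd = ρ)
    (hF : MemLp (fun w : (Y × Y) × Y => dist w.1.1 w.1.2) (ENNReal.ofReal p) θ)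
    (hG : MemLp (fun w : (Y × Y) × Y => dist w.1.2 w.2) (ENNReal.ofReal p) θ) :
    Wp p μ ρ ≤
      (∫ w, dist w.1.1 w.1.2 ^ p ∂θ) ^ (1 / p) + (∫ w, dist w.1.2 w.2 ^ p ∂θ) ^ (1 / p) := by
  have hm : Measurable fun w : (Y × Y) × Y => (w.1.1, w.2) := by fun_prop
  have hσ₁ : (θ.map fun w => (w.1.1, w.2)).map Prod.fst = μ := by
    rwa [Measure.map_map measurable_fst hm]
  have hσ₂ : (θ.map fun w => (w.1.1, w.2)).map Prod.snd = ρ := by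
    rwa [Measure.map_map measurable_snd hm]
  have hFG : Integrable (fun w => ‖dist w.1.1 w.1.2 + dist w.1.2 w.2‖ ^ p) θ := by
    simpa [ENNReal.toReal_ofReal (by linarith : 0 ≤ p)] using
      (hF.add hG).integrable_norm_rpow (by simp; linarith) ENNReal.ofReal_ne_top
  have hcost : Continuous fun z : Y × Y => dist z.1 z.2 ^ p := by fun_prop (disch := linarith)
  calc Wp p μ ρ ≤ (∫ z, dist z.1 z.2 ^ p ∂(θ.map fun w => (w.1.1, w.2))) ^ (1 / p) :=
        Real.rpow_le_rpow wcost_dist_rpow_nonneg (wcost_dist_rpow_le_integral hσ₁ hσ₂)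
          (by positivity)
    _ = (∫ w, dist w.1.1 w.2 ^ p ∂θ) ^ (1 / p) := by
        rw [integral_map hm.aemeasurable hcost.aestronglyMeasurable]
    _ ≤ (∫ w, ‖dist w.1.1 w.1.2 + dist w.1.2 w.2‖ ^ p ∂θ) ^ (1 / p) := by
        refine Real.rpow_le_rpow (integral_nonneg fun _ => by positivity) (integral_mono_of_nonneg
          (ae_of_all _ fun _ => by positivity) hFG (ae_of_all _ fun w => ?_)) (by positivity)
        dsimp only
        rw [Real.norm_of_nonneg (by positivity)]
        exact Real.rpow_le_rpow dist_nonneg (dist_triangle _ _ _) (by linarith)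
    _ ≤ (∫ w, ‖dist w.1.1 w.1.2‖ ^ p ∂θ) ^ (1 / p) + (∫ w, ‖dist w.1.2 w.2‖ ^ p ∂θ) ^ (1 / p) := by
        simpa only [one_div] using integral_norm_add_rpow_le hp hF hG
    _ = _ := by simp only [Real.norm_of_nonneg dist_nonneg]

lemma wp_le_rpow_integral_add_rpow_integral (hp : 1 ≤ p) [IsProbabilityMeasure ν]
    {π₁ π₂ : Measure (Y × Y)} (h₁₁ : π₁.map Prod.fst = μ)
    (h₁₂ : π₁.map Prod.snd = ν) (h₂₁ : π₂.map Prod.fst = ν) (h₂₂ : π₂.map Prod.snd = ρ)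
    (hπ₁ : MemLp (fun z : Y × Y => dist z.1 z.2) (ENNReal.ofReal p) π₁)
    (hπ₂ : MemLp (fun z : Y × Y => dist z.1 z.2) (ENNReal.ofReal p) π₂) :
    Wp p μ ρ ≤ (∫ z, dist z.1 z.2 ^ p ∂π₁) ^ (1 / p) + (∫ z, dist z.1 z.2 ^ p ∂π₂) ^ (1 / p) := by
  have : Nonempty Y := nonempty_of_isProbabilityMeasure ν
  have : IsProbabilityMeasure π₁ :=
    (Measure.isProbabilityMeasure_map_iff measurable_snd.aemeasurable).1 (h₁₂ ▸ inferInstance)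
  have : IsProbabilityMeasure π₂ :=
    (Measure.isProbabilityMeasure_map_iff measurable_fst.aemeasurable).1 (h₂₁ ▸ inferInstance)
  obtain ⟨θ, rfl, rfl⟩ := exists_gluing (h₁₂.trans h₂₁.symm)
  have hm : Measurable fun w : (Y × Y) × Y => (w.1.2, w.2) := by fun_prop
  have hcost : Continuous fun z : Y × Y => dist z.1 z.2 ^ p := by fun_prop (disch := linarith)
  rw [integral_map measurable_fst.aemeasurable hcost.aestronglyMeasurable,
    integral_map hm.aemeasurable hcost.aestronglyMeasurable]
  refine wp_le_rpow_integral_dist_add_rpow_integral_dist hp ?_ ?_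
    (hπ₁.comp_of_map measurable_fst.aemeasurable) (hπ₂.comp_of_map hm.aemeasurable)
  · rw [← h₁₁, Measure.map_map measurable_fst measurable_fst]; rfl
  · rw [← h₂₂, Measure.map_map measurable_snd hm]; rfl

lemma wp_triangle (hp : 1 ≤ p) (hμ : MemPp p μ) (hν : MemPp p ν) (hρ : MemPp p ρ) :
    Wp p μ ρ ≤ Wp p μ ν + Wp p ν ρ := by
  have hp0 : 0 < p := by linarith
  have := hμ.1; have := hν.1; have := hρ.1
  obtain ⟨y₀⟩ := nonempty_of_isProbabilityMeasure μ
  refine le_of_forall_pos_lt_add fun ε hε => ?_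
  obtain ⟨π₁, h₁₁, h₁₂, hπ₁⟩ := exists_coupling_rpow_integral_lt hp0 (half_pos hε) (μ := μ) (ν := ν)
  obtain ⟨π₂, h₂₁, h₂₂, hπ₂⟩ := exists_coupling_rpow_integral_lt hp0 (half_pos hε) (μ := ν) (ν := ρ)
  calc Wp p μ ρ
      ≤ (∫ z, dist z.1 z.2 ^ p ∂π₁) ^ (1 / p) + (∫ z, dist z.1 z.2 ^ p ∂π₂) ^ (1 / p) :=
        wp_le_rpow_integral_add_rpow_integral hp h₁₁ h₁₂ h₂₁ h₂₂
          (memLp_dist_of_memLp_map y₀ (h₁₁ ▸ hμ.memLp_dist hp0 y₀) (h₁₂ ▸ hν.memLp_dist hp0 y₀))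
          (memLp_dist_of_memLp_map y₀ (h₂₁ ▸ hν.memLp_dist hp0 y₀) (h₂₂ ▸ hρ.memLp_dist hp0 y₀))
    _ < Wp p μ ν + ε / 2 + (Wp p ν ρ + ε / 2) := add_lt_add hπ₁ hπ₂
    _ = Wp p μ ν + Wp p ν ρ + ε := by ring

lemma abs_wp_sub_wp_le (hp : 1 ≤ p) {μ' ν' : Measure Y} (hμ : MemPp p μ) (hμ' : MemPp p μ')
    (hν : MemPp p ν) (hν' : MemPp p ν') :
    |Wp p μ ν - Wp p μ' ν'| ≤ Wp p μ μ' + Wp p ν ν' := by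
  have h₁ := wp_triangle hp hμ hμ' hν
  have h₂ := wp_triangle hp hμ' hν' hν
  have h₃ := wp_triangle hp hμ' hμ hν'
  have h₄ := wp_triangle hp hμ hν hν'
  rw [abs_sub_le_iff]
  constructor <;> linarith [wp_comm (p := p) μ μ', wp_comm (p := p) ν ν']

end Polish

lemma MemQp.memPp {X Y : Type*} [MeasurableSpace X] [PseudoMetricSpace X] [MeasurableSpace Y]
    [PseudoMetricSpace Y] {p : ℝ} {Q : X → Measure Y} (hQ : MemQp p Q) (x : X) :
    MemPp p (Q x) :=
  ⟨hQ.1 x, hQ.2.2.1 x⟩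

lemma lipschitzWith_wp_of_kernelLip {X Y : Type*} [PseudoMetricSpace X] [MeasurableSpace X]
    [MetricSpace Y] [PolishSpace Y] [MeasurableSpace Y] [BorelSpace Y] {p : ℝ}
    {P Q : X → Measure Y} (hp : 1 ≤ p) (hP : ∀ x, MemPp p (P x))
    (hQ : ∀ x, MemPp p (Q x)) {LP LQ : ℝ} (hPL : KernelLip p LP P) (hQL : KernelLip p LQ Q) :
    LipschitzWith (LP + LQ).toNNReal fun x => Wp p (P x) (Q x) :=
  LipschitzWith.of_dist_le' fun x x' => by
    rw [Real.dist_eq, add_mul]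
    exact (abs_wp_sub_wp_le hp (hP x) (hP x') (hQ x) (hQ x')).trans
      (add_le_add (hPL x x') (hQL x x'))

lemma TendstoPp.tendsto_integral_of_abs_le {X : Type*} [PseudoMetricSpace X] [MeasurableSpace X]
    {p : ℝ} {μs : ℕ → Measure X} {μ : Measure X}
    (h : TendstoPp p μs μ) {f : X → ℝ} (hf : Continuous f) {x₀ : X} {C : ℝ} (hC : 0 < C)
    (hfC : ∀ x, |f x| ≤ C * (1 + dist x₀ x ^ p)) :
    Tendsto (fun k => ∫ x, f x ∂(μs k)) atTop (nhds (∫ x, f x ∂μ)) := by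
  have hφ := h x₀ (fun x => f x / C) (hf.div_const C) fun x => by
    rw [abs_div, abs_of_pos hC, div_le_iff₀ hC, mul_comm]
    exact hfC x
  simp_rw [integral_div] at hφ
  simpa [div_mul_cancel₀ _ hC.ne'] using hφ.mul_const C

theorem itd_tendsto_of_marginal_tendsto_general {X Y : Type*}
    [MetricSpace X] [MeasurableSpace X]
    [MetricSpace Y] [PolishSpace Y] [MeasurableSpace Y] [BorelSpace Y]
    (p : ℝ) (hp : 1 ≤ p) (P Q : X → Measure Y) (hP : MemQp p P) (hQ : MemQp p Q)
    (LP LQ : ℝ) (hPLip : KernelLip p LP P) (hQLip : KernelLip p LQ Q)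
    (lams : ℕ → Measure X) (lam : Measure X)
    (hconv : TendstoPp p lams lam) :
    Filter.Tendsto (fun k => ∫ x, Wp p (P x) (Q x) ^ p ∂(lams k)) Filter.atTop
      (nhds (∫ x, Wp p (P x) (Q x) ^ p ∂lam)) ∧
    Filter.Tendsto (fun k => ITD p (lams k) P Q) Filter.atTop (nhds (ITD p lam P Q)) := by
  have hp₀ : 0 < p := by linarith
  have hW := lipschitzWith_wp_of_kernelLip hp hP.memPp hQ.memPp hPLip hQLip
  obtain ⟨-, -, -, x₀, -⟩ := hP
  obtain ⟨C, hC, hbound⟩ :=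
    hW.exists_abs_rpow_le_mul_one_add_dist_rpow (fun _ => wp_nonneg) hp₀.le x₀
  have hint := hconv.tendsto_integral_of_abs_le
    (hW.continuous.rpow_const fun _ => Or.inr hp₀.le) hC hbound
  exact ⟨hint, hint.rpow_const (Or.inr (by positivity))⟩

/-- If `P, Q ∈ 𝒬_p(𝒳, 𝒴)` are Lipschitz continuous kernels and
`λ_k → λ` weakly in `𝒫_p(𝒳)`, then `∫ W_p(P(·|x), Q(·|x))^p λ_k(dx) →
∫ W_p(P(·|x), Q(·|x))^p λ(dx)`, and hence `𝒲_p^{λ_k}(P, Q) → 𝒲_p^λ(P, Q)`. -/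
theorem itd_tendsto_of_marginal_tendsto {X Y : Type*}
    [MetricSpace X] [PolishSpace X] [MeasurableSpace X] [BorelSpace X]
    [MetricSpace Y] [PolishSpace Y] [MeasurableSpace Y] [BorelSpace Y]
    (p : ℝ) (hp : 1 ≤ p) (P Q : X → Measure Y) (hP : MemQp p P) (hQ : MemQp p Q)
    (LP LQ : ℝ) (hPLip : KernelLip p LP P) (hQLip : KernelLip p LQ Q)
    (lams : ℕ → Measure X) (lam : Measure X)
    (hlams : ∀ k, MemPp p (lams k)) (hlam : MemPp p lam)
    (hconv : TendstoPp p lams lam) :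
    Filter.Tendsto (fun k => ∫ x, Wp p (P x) (Q x) ^ p ∂(lams k)) Filter.atTop
      (nhds (∫ x, Wp p (P x) (Q x) ^ p ∂lam)) ∧
    Filter.Tendsto (fun k => ITD p (lams k) P Q) Filter.atTop (nhds (ITD p lam P Q)) :=
  itd_tendsto_of_marginal_tendsto_general p hp P Q hP hQ LP LQ hPLip hQLip lams lam hconv
end

section
/- Consider K clients; for each client k, let x_1^k,…,x_m^k be i.i.d. samples from P^k and y_1^k,…,y_n^k i.i.d. samples from Q^k in ℝ^d, all samples mutually independent, and define the empirical measures P_m^k = (1/m)Σ_i δ_{x_i^k} and Q_n^k = (1/n)Σ_j δ_{y_j^k} and the statistic ÎTD² = (1/K) Σ_{k=1}^K W_2(P_m^k, Q_n^k)². Suppose D_x = max_k sup{‖x‖² : x in the support of P^k} and D_y = max_k sup{‖y‖² : y in the support of Q^k} are finite. Then, viewed as a function of the Km + Kn sample points, ÎTD² satisfies the bounded difference property: replacing any single x_i^k by any other point of the support changes ÎTD² by at most 2(D_x + D_y)/(Km), and replacing any single y_j^k changes ÎTD² by at most 2(D_x + D_y)/(Kn). -/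
open MeasureTheory Filter

/-- The squared 2-Wasserstein distance `W_2(μ, ν)²`. -/
noncomputable def W2sq {α : Type*} [MeasurableSpace α] [PseudoMetricSpace α]
    (μ ν : Measure α) : ℝ :=
  Wcost (fun x y => dist x y ^ 2) μ ν

/-- The empirical measure `(1/N) ∑_{i} δ_{f i}` of the points `f 0, …, f (N-1)`. -/
noncomputable def empir {α : Type*} [MeasurableSpace α] (N : ℕ) (f : Fin N → α) : Measure α :=
  ((N : ENNReal))⁻¹ • ∑ i : Fin N, Measure.dirac (f i)

/-- Euclidean space `ℝ^d`. -/
abbrev Euc (d : ℕ) := EuclideanSpace ℝ (Fin d)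

/-- The empirical squared integrated transportation distance with equal weights `1/K`:
`ÎTD² = (1/K) ∑_k W_2(P_m^k, Q_n^k)²` where `P_m^k`, `Q_n^k` are the empirical measures
of the samples of client `k`. -/
noncomputable def ITD2 {d : ℕ} (K m n : ℕ)
    (x : Fin K → Fin m → Euc d) (y : Fin K → Fin n → Euc d) : ℝ :=
  (1 / (K : ℝ)) * ∑ k : Fin K, W2sq (empir m (x k)) (empir n (y k))

/-!
Take a coupling `π` of the empirical measures of `x` and `y`, and let `x'` differ from `x` only
at `i₀`. Moving mass `1/m` of `π` from the fibre `{x i₀} × β` to the fibre `{x' i₀} × β`, keeping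
the second coordinate, gives a coupling of the empirical measures of `x'` and `y`
(`relocateFst`). As costs are nonnegative, this raises the transport cost by at most `C/m` when
`C` bounds the cost from `x' i₀` to every `y j`; taking infima and exchanging `x` and `x'` bounds
the change of `W₂²` by `C/m`. On the supports `‖z - z'‖² ≤ 2(D_x + D_y)`, and only one of the `K`
summands of `ÎTD²` changes. A `y`-sample is handled in the same way, `W₂²` being symmetric.
-/

open scoped ENNReal
open Function Set

section Wcost

variable {α β : Type*} [MeasurableSpace α] [MeasurableSpace β]

lemma map_swap_marginals_integral_flip (c : α → β → ℝ) (π : Measure (α × β)) :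
    (π.map Prod.swap).map Prod.fst = π.map Prod.snd ∧
      (π.map Prod.swap).map Prod.snd = π.map Prod.fst ∧
      ∫ z, flip c z.1 z.2 ∂π.map Prod.swap = ∫ z, c z.1 z.2 ∂π :=
  ⟨by rw [Measure.map_map measurable_fst measurable_swap]; rfl,
    by rw [Measure.map_map measurable_snd measurable_swap]; rfl,
    integral_map_equiv MeasurableEquiv.prodComm _⟩

lemma Wcost_flip (c : α → β → ℝ) (μ : Measure α) (ν : Measure β) :
    Wcost (flip c) ν μ = Wcost c μ ν := by
  unfold Wcost
  congr 1
  ext r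
  constructor
  · rintro ⟨π, rfl, rfl, rfl⟩
    obtain ⟨h₁, h₂, h₃⟩ := map_swap_marginals_integral_flip (flip c) π
    exact ⟨π.map Prod.swap, h₁, h₂, h₃.symm⟩
  · rintro ⟨π, rfl, rfl, rfl⟩
    obtain ⟨h₁, h₂, h₃⟩ := map_swap_marginals_integral_flip c π
    exact ⟨π.map Prod.swap, h₁, h₂, h₃.symm⟩

lemma exists_coupling_of_isProbabilityMeasure (μ : Measure α) (ν : Measure β)
    [IsProbabilityMeasure μ] [IsProbabilityMeasure ν] :
    ∃ π : Measure (α × β), π.map Prod.fst = μ ∧ π.map Prod.snd = ν :=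
  ⟨μ.prod ν, by simp, by simp⟩

lemma Wcost_le_add_of_forall_coupling {c : α → β → ℝ} (hc : ∀ x y, 0 ≤ c x y)
    {μ μ' : Measure α} {ν ν' : Measure β} {ε : ℝ}
    (hne : ∃ π : Measure (α × β), π.map Prod.fst = μ ∧ π.map Prod.snd = ν)
    (h : ∀ π : Measure (α × β), π.map Prod.fst = μ → π.map Prod.snd = ν →
      ∃ π' : Measure (α × β), π'.map Prod.fst = μ' ∧ π'.map Prod.snd = ν' ∧
        ∫ z, c z.1 z.2 ∂π' ≤ ∫ z, c z.1 z.2 ∂π + ε) :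
    Wcost c μ' ν' ≤ Wcost c μ ν + ε := by
  have hbdd : BddBelow {r : ℝ | ∃ π : Measure (α × β),
      π.map Prod.fst = μ' ∧ π.map Prod.snd = ν' ∧ r = ∫ z, c z.1 z.2 ∂π} := by
    refine ⟨0, ?_⟩
    rintro r ⟨π, -, -, rfl⟩
    exact integral_nonneg fun z => hc _ _
  obtain ⟨π₀, h₁, h₂⟩ := hne
  rw [← sub_le_iff_le_add]
  refine le_csInf ⟨_, π₀, h₁, h₂, rfl⟩ ?_
  rintro r ⟨π, h₁, h₂, rfl⟩
  obtain ⟨π', h₁', h₂', hle⟩ := h π h₁ h₂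
  rw [sub_le_iff_le_add]
  exact (csInf_le hbdd ⟨π', h₁', h₂', rfl⟩).trans hle

end Wcost

lemma MeasureTheory.Measure.add_right_cancel_of_isFiniteMeasure {α : Type*} [MeasurableSpace α]
    {μ μ' ν : Measure α} [IsFiniteMeasure ν] (h : μ + ν = μ' + ν) : μ = μ' := by
  ext s
  exact (ENNReal.add_left_inj (measure_ne_top ν s)).1 (congrArg (· s) h)

section relocate

variable {α β : Type*} [MeasurableSpace α] [MeasurableSingletonClass α] [MeasurableSpace β]

noncomputable def relocateFst (π : Measure (α × β)) (a b : α) (u : ℝ≥0∞) : Measure (α × β) :=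
  π.restrict (Prod.fst ⁻¹' {a})ᶜ + (1 - u) • π.restrict (Prod.fst ⁻¹' {a}) +
    u • (π.restrict (Prod.fst ⁻¹' {a})).map (fun z => (b, z.2))

variable {π : Measure (α × β)} {a b : α} {u : ℝ≥0∞}

lemma measurableSet_fst_preimage_singleton (a : α) :
    MeasurableSet (Prod.fst ⁻¹' {a} : Set (α × β)) :=
  measurable_fst (measurableSet_singleton a)

lemma map_fst_restrict_fst_preimage_singleton :
    (π.restrict (Prod.fst ⁻¹' {a})).map Prod.fst = π (Prod.fst ⁻¹' {a}) • Measure.dirac a := by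
  rw [← Measure.restrict_map measurable_fst (measurableSet_singleton a),
    Measure.restrict_singleton, Measure.map_apply measurable_fst (measurableSet_singleton a)]

lemma map_snd_relocateFst (hu : u ≤ 1) :
    (relocateFst π a b u).map Prod.snd = π.map Prod.snd := by
  rw [relocateFst, Measure.map_add _ _ measurable_snd, Measure.map_add _ _ measurable_snd,
    Measure.map_smul, Measure.map_smul,
    Measure.map_map measurable_snd (measurable_const.prodMk measurable_snd),
    show Prod.snd ∘ (fun z : α × β => (b, z.2)) = Prod.snd from rfl, add_assoc, ← add_smul,
    tsub_add_cancel_of_le hu, one_smul, ← Measure.map_add _ _ measurable_snd, add_comm,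
    Measure.restrict_add_restrict_compl (measurableSet_fst_preimage_singleton a)]

lemma map_fst_relocateFst_add (hu : u ≤ 1) :
    (relocateFst π a b u).map Prod.fst + (u * π (Prod.fst ⁻¹' {a})) • Measure.dirac a =
      π.map Prod.fst + (u * π (Prod.fst ⁻¹' {a})) • Measure.dirac b := by
  have hπ : π.map Prod.fst =
      (π.restrict (Prod.fst ⁻¹' {a})ᶜ).map Prod.fst + π (Prod.fst ⁻¹' {a}) • Measure.dirac a := by
    rw [← map_fst_restrict_fst_preimage_singleton, ← Measure.map_add _ _ measurable_fst, add_comm,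
      Measure.restrict_add_restrict_compl (measurableSet_fst_preimage_singleton a)]
  have hmoved : ((π.restrict (Prod.fst ⁻¹' {a})).map fun z => (b, z.2)).map Prod.fst =
      π (Prod.fst ⁻¹' {a}) • Measure.dirac b := by
    rw [Measure.map_map measurable_fst (measurable_const.prodMk measurable_snd),
      show Prod.fst ∘ (fun z : α × β => (b, z.2)) = fun _ => b from rfl, Measure.map_const,
      Measure.restrict_apply_univ]
  have hsplit : ((1 - u) * π (Prod.fst ⁻¹' {a})) • Measure.dirac a +
      (u * π (Prod.fst ⁻¹' {a})) • Measure.dirac a = π (Prod.fst ⁻¹' {a}) • Measure.dirac a := by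
    rw [← add_smul, ← add_mul, tsub_add_cancel_of_le hu, one_mul]
  rw [relocateFst, Measure.map_add _ _ measurable_fst, Measure.map_add _ _ measurable_fst,
    Measure.map_smul, Measure.map_smul, map_fst_restrict_fst_preimage_singleton, hmoved, hπ,
    smul_smul, smul_smul, ← hsplit]
  abel

lemma integral_relocateFst_le [IsFiniteMeasure π] {c : α → β → ℝ} {C : ℝ}
    (hc : Measurable fun z : α × β => c z.1 z.2) (hc₀ : ∀ x y, 0 ≤ c x y)
    (hint : Integrable (fun z => c z.1 z.2) π)
    (hu : u ≤ 1) (hC : ∀ᵐ z ∂π, c b z.2 ≤ C) :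
    ∫ z, c z.1 z.2 ∂relocateFst π a b u ≤
      ∫ z, c z.1 z.2 ∂π + (u * π (Prod.fst ⁻¹' {a})).toReal * C := by
  set s : Set (α × β) := Prod.fst ⁻¹' {a}
  have hT : Measurable fun z : α × β => (b, z.2) := measurable_const.prodMk measurable_snd
  have hintT : Integrable (fun z => c b z.2) (π.restrict s) :=
    Integrable.of_bound (hc.comp hT).aestronglyMeasurable C <|
      (ae_restrict_of_ae hC).mono fun z hz => by
        rw [Real.norm_of_nonneg (hc₀ _ _)]; exact hz
  have hu_top : u ≠ ∞ := ne_top_of_le_ne_top ENNReal.one_ne_top hu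
  have hsum : ∫ z, c z.1 z.2 ∂relocateFst π a b u = ∫ z, c z.1 z.2 ∂π.restrict sᶜ +
      (1 - u).toReal * ∫ z, c z.1 z.2 ∂π.restrict s + u.toReal * ∫ z, c b z.2 ∂π.restrict s := by
    have hmap : Integrable (fun z => c z.1 z.2) (u • (π.restrict s).map fun z => (b, z.2)) :=
      ((integrable_map_measure hc.aestronglyMeasurable hT.aemeasurable).2 hintT).smul_measure
        hu_top
    rw [relocateFst, integral_add_measure
      (hint.restrict.add_measure (hint.restrict.smul_measure (by simp))) hmap,
      integral_add_measure hint.restrict (hint.restrict.smul_measure (by simp)),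
      integral_smul_measure, integral_smul_measure, integral_map hT.aemeasurable
        hc.aestronglyMeasurable, smul_eq_mul, smul_eq_mul]
  have hsplit : ∫ z, c z.1 z.2 ∂π =
      ∫ z, c z.1 z.2 ∂π.restrict sᶜ + ∫ z, c z.1 z.2 ∂π.restrict s := by
    rw [← integral_add_measure hint.restrict hint.restrict, add_comm,
      Measure.restrict_add_restrict_compl (measurableSet_fst_preimage_singleton a)]
  have hmoved : ∫ z, c b z.2 ∂π.restrict s ≤ (π s).toReal * C := by
    calc ∫ z, c b z.2 ∂π.restrict s ≤ ∫ _, C ∂π.restrict s :=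
          integral_mono_ae hintT (integrable_const C) (ae_restrict_of_ae hC)
      _ = (π s).toReal * C := by
          rw [integral_const, measureReal_restrict_apply_univ, smul_eq_mul, measureReal_def]
  have hkept : (1 - u).toReal * ∫ z, c z.1 z.2 ∂π.restrict s ≤ ∫ z, c z.1 z.2 ∂π.restrict s :=
    mul_le_of_le_one_left (integral_nonneg fun z => hc₀ _ _)
      (ENNReal.toReal_le_of_le_ofReal zero_le_one (by simp))
  rw [hsum, hsplit, ENNReal.toReal_mul, mul_assoc]
  gcongr

lemma exists_coupling_move_mass_fst [IsFiniteMeasure π] {c : α → β → ℝ} {C : ℝ} {w : ℝ≥0∞}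
    {μ' : Measure α} (hc : Measurable fun z : α × β => c z.1 z.2) (hc₀ : ∀ x y, 0 ≤ c x y)
    (hint : Integrable (fun z => c z.1 z.2) π) (hC : ∀ᵐ z ∂π, c b z.2 ≤ C)
    (hw : w ≤ π (Prod.fst ⁻¹' {a}))
    (hμ' : π.map Prod.fst + w • Measure.dirac b = μ' + w • Measure.dirac a) :
    ∃ π' : Measure (α × β), π'.map Prod.fst = μ' ∧ π'.map Prod.snd = π.map Prod.snd ∧
      ∫ z, c z.1 z.2 ∂π' ≤ ∫ z, c z.1 z.2 ∂π + w.toReal * C := by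
  obtain ⟨u, hu, rfl⟩ : ∃ u ≤ 1, u * π (Prod.fst ⁻¹' {a}) = w := by
    refine ⟨w / π (Prod.fst ⁻¹' {a}), ENNReal.div_le_of_le_mul (by rwa [one_mul]), ?_⟩
    rcases eq_or_ne (π (Prod.fst ⁻¹' {a})) 0 with ht | ht
    · rw [ht, mul_zero, eq_comm, ← nonpos_iff_eq_zero, ← ht]; exact hw
    · exact ENNReal.div_mul_cancel ht (measure_ne_top _ _)
  have : IsFiniteMeasure ((u * π (Prod.fst ⁻¹' {a})) • Measure.dirac a) :=
    ⟨by simpa using ENNReal.mul_lt_top (hu.trans_lt ENNReal.one_lt_top) (measure_lt_top π _)⟩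
  exact ⟨relocateFst π a b u,
    Measure.add_right_cancel_of_isFiniteMeasure ((map_fst_relocateFst_add hu).trans hμ'),
    map_snd_relocateFst hu, integral_relocateFst_le hc hc₀ hint hu hC⟩

end relocate

section empir

variable {α : Type*} [MeasurableSpace α] {N : ℕ} {f : Fin N → α}

lemma empir_apply (s : Set α) : empir N f s = (N : ℝ≥0∞)⁻¹ * ∑ i, Measure.dirac (f i) s := by
  simp [empir, Measure.finsetSum_apply]

lemma isProbabilityMeasure_empir (hN : N ≠ 0) : IsProbabilityMeasure (empir N f) :=
  ⟨by simp [empir_apply, ENNReal.inv_mul_cancel (Nat.cast_ne_zero.2 hN)]⟩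

lemma inv_natCast_le_empir_apply {s : Set α} {i : Fin N} (hi : f i ∈ s) :
    (N : ℝ≥0∞)⁻¹ ≤ empir N f s := by
  rw [empir_apply]
  refine le_mul_of_one_le_right' ?_
  calc (1 : ℝ≥0∞) = Measure.dirac (f i) s := (Measure.dirac_apply_of_mem hi).symm
    _ ≤ ∑ j, Measure.dirac (f j) s :=
      Finset.single_le_sum (f := fun j => Measure.dirac (f j) s) (fun _ _ => zero_le)
        (Finset.mem_univ i)

lemma ae_mem_range_empir [MeasurableSingletonClass α] : ∀ᵐ z ∂empir N f, z ∈ range f := by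
  rw [ae_iff]
  simp [empir_apply]

lemma empir_update_add_dirac (i : Fin N) (b : α) :
    empir N (update f i b) + (N : ℝ≥0∞)⁻¹ • Measure.dirac (f i) =
      empir N f + (N : ℝ≥0∞)⁻¹ • Measure.dirac b := by
  simp only [empir, ← smul_add]
  congr 1
  rw [← Finset.add_sum_erase _ _ (Finset.mem_univ i),
    ← Finset.add_sum_erase _ (fun j => Measure.dirac (f j)) (Finset.mem_univ i),
    Finset.sum_congr rfl fun j hj => by rw [update_of_ne (Finset.ne_of_mem_erase hj)],
    update_self]
  abel

end empir

section empirWcost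

variable {α β : Type*} [MeasurableSpace α] [MeasurableSingletonClass α] [MeasurableSpace β]
  [MeasurableSingletonClass β] {c : α → β → ℝ} {m n : ℕ} {x : Fin m → α} {y : Fin n → β} {C : ℝ}

lemma Wcost_empir_update_le (hc : Measurable fun z : α × β => c z.1 z.2)
    (hc₀ : ∀ x y, 0 ≤ c x y) (hn : n ≠ 0) (hxy : ∀ i j, c (x i) (y j) ≤ C) (i₀ : Fin m) {b : α}
    (hb : ∀ j, c b (y j) ≤ C) :
    Wcost c (empir m (update x i₀ b)) (empir n y) ≤ Wcost c (empir m x) (empir n y) + C / m := by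
  have := isProbabilityMeasure_empir (f := x) i₀.pos.ne'
  have := isProbabilityMeasure_empir (f := y) hn
  refine Wcost_le_add_of_forall_coupling hc₀ (exists_coupling_of_isProbabilityMeasure _ _)
    fun π h₁ h₂ => ?_
  have : IsProbabilityMeasure π := by
    have : IsProbabilityMeasure (π.map Prod.fst) := h₁ ▸ inferInstance
    exact Measure.isProbabilityMeasure_of_map Prod.fst
  have hfst : ∀ᵐ z ∂π, z.1 ∈ range x :=
    ae_of_ae_map measurable_fst.aemeasurable (h₁ ▸ ae_mem_range_empir)
  have hsnd : ∀ᵐ z ∂π, z.2 ∈ range y :=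
    ae_of_ae_map measurable_snd.aemeasurable (h₂ ▸ ae_mem_range_empir)
  have hint : Integrable (fun z => c z.1 z.2) π :=
    Integrable.of_bound hc.aestronglyMeasurable C <|
      (hfst.and hsnd).mono fun z ⟨⟨i, hi⟩, ⟨j, hj⟩⟩ => by
        rw [Real.norm_of_nonneg (hc₀ _ _), ← hi, ← hj]; exact hxy i j
  have hw : (m : ℝ≥0∞)⁻¹ ≤ π (Prod.fst ⁻¹' {x i₀}) := by
    rw [← Measure.map_apply measurable_fst (measurableSet_singleton _), h₁]
    exact inv_natCast_le_empir_apply rfl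
  obtain ⟨π', h₁', h₂', hle⟩ := exists_coupling_move_mass_fst hc hc₀ hint
    (hsnd.mono fun z ⟨j, hj⟩ => hj ▸ hb j) hw
    (by rw [h₁]; exact (empir_update_add_dirac i₀ b).symm)
  refine ⟨π', h₁', h₂'.trans h₂, hle.trans_eq ?_⟩
  rw [ENNReal.toReal_inv, ENNReal.toReal_natCast, inv_mul_eq_div]

lemma abs_Wcost_sub_Wcost_empir_update_le (hc : Measurable fun z : α × β => c z.1 z.2)
    (hc₀ : ∀ x y, 0 ≤ c x y) (hn : n ≠ 0) (hxy : ∀ i j, c (x i) (y j) ≤ C) (i₀ : Fin m) {b : α}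
    (hb : ∀ j, c b (y j) ≤ C) :
    |Wcost c (empir m x) (empir n y) - Wcost c (empir m (update x i₀ b)) (empir n y)| ≤ C / m := by
  have hxy' : ∀ i j, c (update x i₀ b i) (y j) ≤ C := fun i j => by
    rcases eq_or_ne i i₀ with rfl | hi
    · simpa using hb j
    · simpa [hi] using hxy i j
  have h₁ := Wcost_empir_update_le hc hc₀ hn hxy i₀ hb
  have h₂ := Wcost_empir_update_le hc hc₀ hn hxy' i₀ (hxy i₀)
  rw [update_idem, update_eq_self] at h₂
  exact abs_sub_le_iff.2 ⟨by linarith, by linarith⟩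

end empirWcost

lemma W2sq_comm {α : Type*} [MeasurableSpace α] [PseudoMetricSpace α] (μ ν : Measure α) :
    W2sq μ ν = W2sq ν μ := by
  rw [W2sq, W2sq, ← Wcost_flip]
  congr 1
  funext x y
  exact congrArg (· ^ 2) (dist_comm y x)

section W2sq

variable {α : Type*} [MetricSpace α] [MeasurableSpace α] [BorelSpace α]
  [SecondCountableTopology α] {m n : ℕ} {x : Fin m → α} {y : Fin n → α} {C : ℝ}

lemma abs_W2sq_sub_W2sq_empir_update_left_le (hn : n ≠ 0) (hxy : ∀ i j, dist (x i) (y j) ^ 2 ≤ C)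
    (i₀ : Fin m) {b : α} (hb : ∀ j, dist b (y j) ^ 2 ≤ C) :
    |W2sq (empir m x) (empir n y) - W2sq (empir m (update x i₀ b)) (empir n y)| ≤ C / m :=
  abs_Wcost_sub_Wcost_empir_update_le (measurable_dist.pow_const 2)
    (fun _ _ => sq_nonneg _) hn hxy i₀ hb

lemma abs_W2sq_sub_W2sq_empir_update_right_le (hm : m ≠ 0) (hxy : ∀ i j, dist (x i) (y j) ^ 2 ≤ C)
    (j₀ : Fin n) {b : α} (hb : ∀ i, dist (x i) b ^ 2 ≤ C) :
    |W2sq (empir m x) (empir n y) - W2sq (empir m x) (empir n (update y j₀ b))| ≤ C / n := by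
  rw [W2sq_comm (empir m x), W2sq_comm (empir m x)]
  exact abs_W2sq_sub_W2sq_empir_update_left_le hm (fun j i => dist_comm (x i) (y j) ▸ hxy i j) j₀
    fun i => dist_comm (x i) b ▸ hb i

end W2sq

lemma dist_sq_le_two_mul_norm_sq_add {E : Type*} [SeminormedAddCommGroup E] (z z' : E) :
    dist z z' ^ 2 ≤ 2 * (‖z‖ ^ 2 + ‖z'‖ ^ 2) :=
  (pow_le_pow_left₀ dist_nonneg (dist_le_norm_add_norm z z') 2).trans add_sq_le

lemma ITD2_sub_ITD2_of_forall_ne {d K m n : ℕ} {x x' : Fin K → Fin m → Euc d}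
    {y y' : Fin K → Fin n → Euc d} (k₀ : Fin K) (hx : ∀ k ≠ k₀, x' k = x k)
    (hy : ∀ k ≠ k₀, y' k = y k) :
    ITD2 K m n x y - ITD2 K m n x' y' =
      (W2sq (empir m (x k₀)) (empir n (y k₀)) - W2sq (empir m (x' k₀)) (empir n (y' k₀))) / K := by
  rw [ITD2, ITD2, ← mul_sub, ← Finset.sum_sub_distrib, one_div_mul_eq_div,
    Finset.sum_eq_single k₀ (fun k _ hk => by rw [hx k hk, hy k hk, sub_self])
      fun h => absurd (Finset.mem_univ _) h]

theorem itd2_bounded_difference_general {d : ℕ} (K m n : ℕ) (hm : 0 < m) (hn : 0 < n)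
    (S T : Fin K → Set (Euc d)) (Dx Dy : ℝ)
    (hDx : ∀ k, ∀ z ∈ S k, ‖z‖ ^ 2 ≤ Dx) (hDy : ∀ k, ∀ z ∈ T k, ‖z‖ ^ 2 ≤ Dy)
    (x : Fin K → Fin m → Euc d) (y : Fin K → Fin n → Euc d)
    (hx : ∀ k i, x k i ∈ S k) (hy : ∀ k j, y k j ∈ T k) :
    (∀ (x' : Fin K → Fin m → Euc d) (k₀ : Fin K) (i₀ : Fin m),
      (∀ k i, ¬(k = k₀ ∧ i = i₀) → x' k i = x k i) → (∀ k i, x' k i ∈ S k) →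
      |ITD2 K m n x y - ITD2 K m n x' y| ≤ 2 * (Dx + Dy) / (K * m)) ∧
    (∀ (y' : Fin K → Fin n → Euc d) (k₀ : Fin K) (j₀ : Fin n),
      (∀ k j, ¬(k = k₀ ∧ j = j₀) → y' k j = y k j) → (∀ k j, y' k j ∈ T k) →
      |ITD2 K m n x y - ITD2 K m n x y'| ≤ 2 * (Dx + Dy) / (K * n)) := by
  have hcost : ∀ k, ∀ z ∈ S k, ∀ z' ∈ T k, dist z z' ^ 2 ≤ 2 * (Dx + Dy) :=
    fun k z hz z' hz' => (dist_sq_le_two_mul_norm_sq_add z z').trans <| by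
      gcongr
      exacts [hDx k z hz, hDy k z' hz']
  have hscale : ∀ {N : ℕ} {Δ : ℝ}, |Δ| ≤ 2 * (Dx + Dy) / N → |Δ / K| ≤ 2 * (Dx + Dy) / (K * N) :=
    fun h => by
      rw [abs_div, Nat.abs_cast, mul_comm (K : ℝ), ← div_div]
      exact div_le_div_of_nonneg_right h K.cast_nonneg
  refine ⟨fun x' k₀ i₀ hx' hx'S => ?_, fun y' k₀ j₀ hy' hy'T => ?_⟩
  · have hupdate : x' k₀ = update (x k₀) i₀ (x' k₀ i₀) :=
      eq_update_iff.2 ⟨rfl, fun i hi => hx' k₀ i fun h => hi h.2⟩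
    rw [ITD2_sub_ITD2_of_forall_ne k₀ (fun k hk => funext fun i => hx' k i fun h => hk h.1)
      fun _ _ => rfl, hupdate]
    exact hscale <| abs_W2sq_sub_W2sq_empir_update_left_le hn.ne'
      (fun i j => hcost k₀ _ (hx k₀ i) _ (hy k₀ j)) i₀
      fun j => hcost k₀ _ (hx'S k₀ i₀) _ (hy k₀ j)
  · have hupdate : y' k₀ = update (y k₀) j₀ (y' k₀ j₀) :=
      eq_update_iff.2 ⟨rfl, fun j hj => hy' k₀ j fun h => hj h.2⟩
    rw [ITD2_sub_ITD2_of_forall_ne k₀ (fun _ _ => rfl)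
      fun k hk => funext fun j => hy' k j fun h => hk h.1, hupdate]
    exact hscale <| abs_W2sq_sub_W2sq_empir_update_right_le hm.ne'
      (fun i j => hcost k₀ _ (hx k₀ i) _ (hy k₀ j)) j₀
      fun i => hcost k₀ _ (hx k₀ i) _ (hy'T k₀ j₀)

/-- (Bounded difference property of `ÎTD²`.) If all sample points of client
`k` lie in the support sets `S k` (for the `x`-samples) and `T k` (for the `y`-samples), with
`‖z‖² ≤ D_x` on each `S k` and `‖z‖² ≤ D_y` on each `T k`, then replacing a single `x`-sample
point by another point of the support changes `ÎTD²` by at most `2(D_x + D_y)/(K m)`, and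
replacing a single `y`-sample point changes it by at most `2(D_x + D_y)/(K n)`. -/
theorem itd2_bounded_difference {d : ℕ} (K m n : ℕ) (hK : 0 < K) (hm : 0 < m) (hn : 0 < n)
    (S T : Fin K → Set (Euc d)) (Dx Dy : ℝ)
    (hDx : ∀ k, ∀ z ∈ S k, ‖z‖ ^ 2 ≤ Dx) (hDy : ∀ k, ∀ z ∈ T k, ‖z‖ ^ 2 ≤ Dy)
    (x : Fin K → Fin m → Euc d) (y : Fin K → Fin n → Euc d)
    (hx : ∀ k i, x k i ∈ S k) (hy : ∀ k j, y k j ∈ T k) :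
    (∀ (x' : Fin K → Fin m → Euc d) (k₀ : Fin K) (i₀ : Fin m),
      (∀ k i, ¬(k = k₀ ∧ i = i₀) → x' k i = x k i) → (∀ k i, x' k i ∈ S k) →
      |ITD2 K m n x y - ITD2 K m n x' y| ≤ 2 * (Dx + Dy) / (K * m)) ∧
    (∀ (y' : Fin K → Fin n → Euc d) (k₀ : Fin K) (j₀ : Fin n),
      (∀ k j, ¬(k = k₀ ∧ j = j₀) → y' k j = y k j) → (∀ k j, y' k j ∈ T k) →
      |ITD2 K m n x y - ITD2 K m n x y'| ≤ 2 * (Dx + Dy) / (K * n)) :=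
  itd2_bounded_difference_general K m n hm hn S T Dx Dy hDx hDy x y hx hy
end
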